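/- arXiv:2306.12575 — 3 statements merged into one kernel-verified Lean document; each statement's English description precedes it below -/
import Mathlib

section
/- Let $T$ be a caterpillar whose spine (vertices of degree at least 2) has exactly $p = 3$ vertices, where only the two end spine vertices have leaves, with $\ell$ and $t$ leaves respectively, $\ell \geq t \geq 1$, and $n = \ell + t + 3$ vertices total. If the firefighter is restricted to defending only once (e.g., distance $d \leq 2$ or path-restrictions), then the total number of burnt vertices summed over all starting vertices is at least $2(n-3) + 4 + t = 2n - 2 + t$, hence the expected damage is strictly greater than $2 - 2/n$. -/
open SimpleGraph Finset
open scoped Classical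

namespace FF

variable {V : Type*} [Fintype V] [DecidableEq V]

/-- One step of fire spread: the fire spreads to every undefended neighbour of a burnt vertex. -/
noncomputable def spread (G : SimpleGraph V) (D B : Finset V) : Finset V :=
  B ∪ Finset.univ.filter (fun v => v ∉ D ∧ ∃ u ∈ B, G.Adj u v)

/-- Cumulative defended set of a classic strategy. -/
noncomputable def cumDef (σ : ℕ → Finset V) (t : ℕ) : Finset V :=
  (Finset.range (t + 1)).biUnion σ

/-- Burnt set at time `t` in the classic game. -/
noncomputable def burnt (G : SimpleGraph V) (F : Finset V) (σ : ℕ → Finset V) : ℕ → Finset V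
  | 0 => F
  | t + 1 => spread G (cumDef σ t) (burnt G F σ t)

/-- A classic strategy is valid for `b` firefighters. -/
def ValidClassic (G : SimpleGraph V) (F : Finset V) (b : ℕ) (σ : ℕ → Finset V) : Prop :=
  ∀ t, (σ t).card ≤ b ∧ ∀ v ∈ σ t, v ∉ burnt G F σ t

/-- Final burnt set (the process stabilizes after `|V|` steps). -/
noncomputable def finalBurnt (G : SimpleGraph V) (F : Finset V) (σ : ℕ → Finset V) : Finset V :=
  burnt G F σ (Fintype.card V)

/-- Maximum number of vertices saved in the classic game. -/
noncomputable def MVS (G : SimpleGraph V) (F : Finset V) (b : ℕ) : ℕ :=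
  sSup {k | ∃ σ : ℕ → Finset V, ValidClassic G F b σ ∧
    k = Fintype.card V - (finalBurnt G F σ).card}

/-- Defended set induced by firefighter positions up to time `t`. -/
noncomputable def posDef {b : ℕ} (p : ℕ → Fin b → V) (t : ℕ) : Finset V :=
  (Finset.range (t + 1)).biUnion (fun τ => Finset.univ.image (p τ))

/-- Burnt set at time `t` in the position-based games. -/
noncomputable def pburnt (G : SimpleGraph V) (F : Finset V) {b : ℕ}
    (p : ℕ → Fin b → V) : ℕ → Finset V
  | 0 => F
  | t + 1 => spread G (posDef p t) (pburnt G F p t)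

/-- Validity for the distance-restricted game: firefighters never occupy a burnt
vertex and move graph distance at most `d` each turn. -/
def ValidDR (G : SimpleGraph V) (F : Finset V) (d : ℕ) {b : ℕ} (p : ℕ → Fin b → V) : Prop :=
  (∀ t i, p t i ∉ pburnt G F p t) ∧ ∀ t i, G.dist (p t i) (p (t + 1) i) ≤ d

/-- Distance-restricted maximum vertices saved. -/
noncomputable def DRMVS (G : SimpleGraph V) (F : Finset V) (b d : ℕ) : ℕ :=
  sSup {k | ∃ p : ℕ → Fin b → V, ValidDR G F d p ∧
    k = Fintype.card V - (pburnt G F p (Fintype.card V)).card}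

/-- Validity for the path-restricted game with unlimited distance: firefighters
move along walks of unburnt vertices. -/
def ValidPR (G : SimpleGraph V) (F : Finset V) {b : ℕ} (p : ℕ → Fin b → V) : Prop :=
  (∀ t i, p t i ∉ pburnt G F p t) ∧
    ∀ t i, ∃ w : G.Walk (p t i) (p (t + 1) i),
      ∀ v ∈ w.support, v ∉ pburnt G F p (t + 1)

/-- Path-restricted (unlimited distance) maximum vertices saved. -/
noncomputable def PRMVS (G : SimpleGraph V) (F : Finset V) (b : ℕ) : ℕ :=
  sSup {k | ∃ p : ℕ → Fin b → V, ValidPR G F p ∧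
    k = Fintype.card V - (pburnt G F p (Fintype.card V)).card}

/-- Validity for the distance- and path-restricted game. -/
def ValidDPR (G : SimpleGraph V) (F : Finset V) (d : ℕ) {b : ℕ} (p : ℕ → Fin b → V) : Prop :=
  (∀ t i, p t i ∉ pburnt G F p t) ∧
    ∀ t i, ∃ w : G.Walk (p t i) (p (t + 1) i), w.length ≤ d ∧
      ∀ v ∈ w.support, v ∉ pburnt G F p (t + 1)

/-- Distance- and path-restricted maximum vertices saved. -/
noncomputable def DPRMVS (G : SimpleGraph V) (F : Finset V) (b d : ℕ) : ℕ :=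
  sSup {k | ∃ p : ℕ → Fin b → V, ValidDPR G F d p ∧
    k = Fintype.card V - (pburnt G F p (Fintype.card V)).card}

/-- Burnt count in the single-defence game: the firefighter defends a single
vertex `w ≠ s` and the fire then burns everything reachable from `s` avoiding `w`. -/
noncomputable def sdBurnt (G : SimpleGraph V) (s : V) : ℕ :=
  sInf {k | ∃ w, w ≠ s ∧
    k = (Finset.univ.filter (fun x => ∃ q : G.Walk s x, w ∉ q.support)).card}

end FF

open FF

/-- One-directional edge description of the caterpillar with spine `0 - 1 - 2`,
`ℓ` leaves on spine vertex `0` (namely `3,…,ℓ+2`) and `t` leaves on spine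
vertex `2` (namely `ℓ+3,…,ℓ+t+2`). -/
def catLink (ℓ : ℕ) {n : ℕ} (a b : Fin n) : Prop :=
  ((a : ℕ) = 0 ∧ (b : ℕ) = 1) ∨ ((a : ℕ) = 1 ∧ (b : ℕ) = 2) ∨
  ((a : ℕ) = 0 ∧ 3 ≤ (b : ℕ) ∧ (b : ℕ) < ℓ + 3) ∨
  ((a : ℕ) = 2 ∧ ℓ + 3 ≤ (b : ℕ))

/-- The caterpillar with three spine vertices, `ℓ` leaves on one spine end and
`t` leaves on the other, on `n = ℓ + t + 3` vertices. -/
def catG (ℓ t : ℕ) : SimpleGraph (Fin (ℓ + t + 3)) where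
  Adj a b := catLink ℓ a b ∨ catLink ℓ b a
  symm := ⟨fun a b h => h.symm⟩
  loopless := by
    constructor
    intro a h
    rcases h with h | h <;> rcases h with h | h | h | h <;> omega

/-!
Once `w ≠ s` is defended, the fire from `s` still reaches every neighbour of a burnt vertex other
than `w`; in particular it burns the closed neighbourhood of `s` except possibly `w`, so the burnt
count at `s` is at least `deg s`. On the caterpillar this gives `ℓ + 1` and `t + 1` at the ends of
the spine and `1` at each of the `ℓ + t` leaves. The middle spine vertex does better than its
degree `2`: if the spine end carrying `t` leaves is defended, the `ℓ + 2` vertices of the other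
star burn; otherwise the first spine end together with the closed neighbourhood of the other,
`t + 3` vertices, burn except for the defended one. Summing gives `2ℓ + 3t + 4 = 2n - 2 + t`.
-/

namespace FF

variable {V : Type*} [Fintype V] (G : SimpleGraph V)

noncomputable def reachAvoiding (s w : V) : Finset V :=
  univ.filter (fun x => ∃ q : G.Walk s x, w ∉ q.support)

variable {G}

theorem mem_reachAvoiding {s w x : V} :
    x ∈ reachAvoiding G s w ↔ ∃ q : G.Walk s x, w ∉ q.support := by
  simp [reachAvoiding]

theorem self_mem_reachAvoiding {s w : V} (h : w ≠ s) : s ∈ reachAvoiding G s w :=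
  mem_reachAvoiding.2 ⟨.nil, by simpa using h⟩

theorem mem_reachAvoiding_of_adj {s w x y : V} (hx : x ∈ reachAvoiding G s w)
    (hxy : G.Adj x y) (hy : y ≠ w) : y ∈ reachAvoiding G s w := by
  obtain ⟨q, hq⟩ := mem_reachAvoiding.1 hx
  exact mem_reachAvoiding.2 ⟨q.concat hxy, by simpa [Walk.support_concat, hq] using hy.symm⟩

theorem closedNbhd_erase_subset_reachAvoiding [DecidableEq V] [DecidableRel G.Adj] {s w u : V}
    (hu : u ∈ reachAvoiding G s w) :
    (insert u (G.neighborFinset u)).erase w ⊆ reachAvoiding G s w := by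
  intro x hx
  obtain ⟨hxw, hx⟩ := mem_erase.1 hx
  rcases mem_insert.1 hx with rfl | hx
  · exact hu
  · exact mem_reachAvoiding_of_adj hu ((G.mem_neighborFinset _ _).1 hx) hxw

theorem degree_le_card_reachAvoiding [DecidableEq V] [DecidableRel G.Adj] {s w u : V}
    (hu : u ∈ reachAvoiding G s w) : G.degree u ≤ #(reachAvoiding G s w) := by
  have hcard : #(insert u (G.neighborFinset u)) = G.degree u + 1 :=
    card_insert_of_notMem (by simp)
  have := card_le_card (closedNbhd_erase_subset_reachAvoiding hu)
  have := pred_card_le_card_erase (s := insert u (G.neighborFinset u)) (a := w)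
  omega

theorem le_sdBurnt {s : V} {m : ℕ} (hne : ∃ w, w ≠ s)
    (h : ∀ w, w ≠ s → m ≤ #(reachAvoiding G s w)) : m ≤ sdBurnt G s := by
  obtain ⟨w, hw⟩ := hne
  exact le_csInf ⟨_, w, hw, rfl⟩ (by rintro k ⟨w, hw, rfl⟩; exact h w hw)

theorem one_le_sdBurnt [Nontrivial V] (s : V) : 1 ≤ sdBurnt G s :=
  le_sdBurnt (exists_ne s) fun _ hw => card_pos.2 ⟨s, self_mem_reachAvoiding hw⟩

theorem degree_le_sdBurnt [DecidableRel G.Adj] (s : V) : G.degree s ≤ sdBurnt G s := by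
  by_cases hne : ∃ w, w ≠ s
  · exact le_sdBurnt hne fun _ hw => degree_le_card_reachAvoiding (self_mem_reachAvoiding hw)
  · push Not at hne
    have : G.neighborFinset s = ∅ := eq_empty_of_forall_notMem fun v hv =>
      G.ne_of_adj ((G.mem_neighborFinset s v).1 hv) (hne v).symm
    simp [← card_neighborFinset_eq_degree, this]

end FF

namespace catG

variable {ℓ t : ℕ}

def spine0 : Fin (ℓ + t + 3) := ⟨0, by omega⟩
def spine1 : Fin (ℓ + t + 3) := ⟨1, by omega⟩
def spine2 : Fin (ℓ + t + 3) := ⟨2, by omega⟩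

theorem spine0_ne_spine1 : (spine0 : Fin (ℓ + t + 3)) ≠ spine1 := by simp [spine0, spine1]
theorem spine0_ne_spine2 : (spine0 : Fin (ℓ + t + 3)) ≠ spine2 := by simp [spine0, spine2]
theorem spine1_ne_spine2 : (spine1 : Fin (ℓ + t + 3)) ≠ spine2 := by simp [spine1, spine2]

theorem spine0_adj_spine1 : (catG ℓ t).Adj spine0 spine1 := Or.inl (Or.inl ⟨rfl, rfl⟩)
theorem spine1_adj_spine2 : (catG ℓ t).Adj spine1 spine2 := Or.inl (Or.inr (Or.inl ⟨rfl, rfl⟩))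

theorem not_adj_spine0_spine2 : ¬ (catG ℓ t).Adj spine0 spine2 := by
  simp [catG, catLink, spine0, spine2]

theorem le_degree_spine0 : ℓ + 1 ≤ (catG ℓ t).degree spine0 := by
  have hsub : insert spine1 (Ioc spine2 ⟨ℓ + 2, by omega⟩) ⊆ (catG ℓ t).neighborFinset spine0 := by
    intro x hx
    rw [mem_neighborFinset]
    rcases mem_insert.1 hx with rfl | hx
    · exact spine0_adj_spine1
    · have hx := mem_Ioc.1 hx
      simp only [Fin.lt_def, Fin.le_def, spine2] at hx
      exact Or.inl (Or.inr (Or.inr (Or.inl ⟨rfl, by omega, by omega⟩)))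
  have := card_le_card hsub
  rw [card_insert_of_notMem (by simp [spine1, spine2]), Fin.card_Ioc] at this
  simpa [spine2] using this

theorem le_degree_spine2 : t + 1 ≤ (catG ℓ t).degree spine2 := by
  have hsub : insert spine1 (Ioi ⟨ℓ + 2, by omega⟩) ⊆ (catG ℓ t).neighborFinset spine2 := by
    intro x hx
    rw [mem_neighborFinset]
    rcases mem_insert.1 hx with rfl | hx
    · exact spine1_adj_spine2.symm
    · have hx := Fin.lt_def.1 (mem_Ioi.1 hx)
      exact Or.inl (Or.inr (Or.inr (Or.inr ⟨rfl, hx⟩)))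
  have := card_le_card hsub
  rw [card_insert_of_notMem (by simp [spine1]), Fin.card_Ioi] at this
  simpa using this

theorem le_card_reachAvoiding_spine1_spine2 :
    ℓ + 2 ≤ #(reachAvoiding (catG ℓ t) spine1 spine2) := by
  have h1 := self_mem_reachAvoiding (G := catG ℓ t) spine1_ne_spine2.symm
  have h0 := mem_reachAvoiding_of_adj h1 spine0_adj_spine1.symm spine0_ne_spine2
  have hsub := closedNbhd_erase_subset_reachAvoiding h0
  rw [erase_eq_of_notMem (by simp [spine0_ne_spine2.symm, not_adj_spine0_spine2])] at hsub
  have := card_le_card hsub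
  rw [card_insert_of_notMem (by simp), card_neighborFinset_eq_degree] at this
  have := le_degree_spine0 (ℓ := ℓ) (t := t)
  omega

theorem le_card_reachAvoiding_spine1 {w : Fin (ℓ + t + 3)} (hw1 : w ≠ spine1) (hw2 : w ≠ spine2) :
    t + 2 ≤ #(reachAvoiding (catG ℓ t) spine1 w) := by
  have h1 := self_mem_reachAvoiding (G := catG ℓ t) hw1
  have h2 := mem_reachAvoiding_of_adj h1 spine1_adj_spine2 hw2.symm
  have hsub : (insert spine0 (insert spine2 ((catG ℓ t).neighborFinset spine2))).erase w ⊆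
      reachAvoiding (catG ℓ t) spine1 w := by
    intro x hx
    obtain ⟨hxw, hx⟩ := mem_erase.1 hx
    rcases mem_insert.1 hx with rfl | hx
    · exact mem_reachAvoiding_of_adj h1 spine0_adj_spine1.symm hxw
    · exact closedNbhd_erase_subset_reachAvoiding h2 (mem_erase.2 ⟨hxw, hx⟩)
  have := card_le_card hsub
  have := pred_card_le_card_erase
    (s := insert spine0 (insert spine2 ((catG ℓ t).neighborFinset spine2))) (a := w)
  have hnadj : ¬ (catG ℓ t).Adj spine2 spine0 := fun h => not_adj_spine0_spine2 h.symm
  rw [card_insert_of_notMem (by simp [spine0_ne_spine2, hnadj]),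
    card_insert_of_notMem (by simp), card_neighborFinset_eq_degree] at this
  have := le_degree_spine2 (ℓ := ℓ) (t := t)
  omega

theorem le_sdBurnt_spine1 (htℓ : t ≤ ℓ) : t + 2 ≤ sdBurnt (catG ℓ t) spine1 := by
  refine le_sdBurnt ⟨spine0, spine0_ne_spine1⟩ fun w hw1 => ?_
  by_cases hw2 : w = spine2
  · subst hw2
    exact (Nat.add_le_add_right htℓ 2).trans le_card_reachAvoiding_spine1_spine2
  · exact le_card_reachAvoiding_spine1 hw1 hw2

theorem le_sum_sdBurnt (htℓ : t ≤ ℓ) : 2 * ℓ + 3 * t + 4 ≤ ∑ s, sdBurnt (catG ℓ t) s := by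
  have hleaves := card_nsmul_le_sum (((univ.erase spine0).erase spine1).erase spine2)
    (fun s => sdBurnt (catG ℓ t) s) 1 fun s _ => one_le_sdBurnt s
  rw [card_erase_of_mem (by simp [spine1_ne_spine2.symm, spine0_ne_spine2.symm]),
    card_erase_of_mem (by simp [spine0_ne_spine1.symm]), card_erase_of_mem (mem_univ _),
    card_univ, Fintype.card_fin, smul_eq_mul, mul_one] at hleaves
  rw [← add_sum_erase _ _ (mem_univ spine0),
    ← add_sum_erase _ _ (by simp [spine0_ne_spine1.symm] : spine1 ∈ univ.erase spine0),
    ← add_sum_erase _ _ (by simp [spine1_ne_spine2.symm, spine0_ne_spine2.symm] :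
      spine2 ∈ (univ.erase spine0).erase spine1)]
  have := (degree_le_sdBurnt spine0).trans' (le_degree_spine0 (ℓ := ℓ) (t := t))
  have := (degree_le_sdBurnt spine2).trans' (le_degree_spine2 (ℓ := ℓ) (t := t))
  have := le_sdBurnt_spine1 htℓ
  omega

end catG

theorem stmt2 (ℓ t : ℕ) (ht : 1 ≤ t) (htℓ : t ≤ ℓ) :
    2 * (ℓ + t + 3) - 2 + t ≤ ∑ s : Fin (ℓ + t + 3), FF.sdBurnt (catG ℓ t) s ∧
    2 - 2 / ((ℓ + t + 3 : ℕ) : ℚ) <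
      (∑ s : Fin (ℓ + t + 3), (FF.sdBurnt (catG ℓ t) s : ℚ)) / ((ℓ + t + 3 : ℕ) : ℚ) := by
  have hsum := catG.le_sum_sdBurnt htℓ
  refine ⟨by omega, ?_⟩
  have hn : (0 : ℚ) < ((ℓ + t + 3 : ℕ) : ℚ) := by positivity
  rw [lt_div_iff₀ hn, sub_mul, div_mul_cancel₀ _ hn.ne']
  have hsumℚ : (2 * ℓ + 3 * t + 4 : ℚ) ≤ ∑ s, (sdBurnt (catG ℓ t) s : ℚ) := by
    exact_mod_cast hsum
  have htℚ : (1 : ℚ) ≤ t := by exact_mod_cast ht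
  push_cast
  linarith
end

section
/- On the path $P_7$, in the path-restricted firefighter game with one fire, one firefighter, and unlimited movement distance, the optimal strategy is to defend the neighbour of the fire on the side containing the longer subpath; the number of burnt vertices when the fire starts at position $i$ (positions $1,\dots,7$) is $\min(i, 8-i)$, and the total over all starting vertices is $1+2+3+4+3+2+1 = 16 > 14$, so the expected damage of $P_7$ exceeds that of $C_7$ (which is 2). In particular, removing an edge from $C_7$ strictly increases the path-restricted expected damage. -/
open SimpleGraph Finset
open scoped Classical

/-!
The origin of the fire is burnt from time `0`, and on a path a walk between two vertices passes
through every vertex in between, so a path-restricted firefighter can never cross the origin: the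
whole side of the origin away from the firefighter burns. Parking the firefighter next to the
origin on the longer side saves all of that side, so `min (i + 1) (n - i)` vertices burn.
On `C₇` the firefighter can defend only one of the two neighbours of the origin in the first
round, so at least two vertices burn; defending `s - 1` and then walking round to `s + 2`
achieves two. Reflecting the path and rotating the cycle are graph isomorphisms, which
transport strategies and burnt sets.
-/

namespace FF

variable {V W : Type*} [DecidableEq V] [DecidableEq W]

lemma mem_posDef {b : ℕ} {p : ℕ → Fin b → V} {t : ℕ} {v : V} :
    v ∈ posDef p t ↔ ∃ τ ≤ t, ∃ j, p τ j = v := by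
  simp [posDef]

lemma posDef_comp (f : V → W) {b : ℕ} (p : ℕ → Fin b → V) (t : ℕ) :
    posDef (fun τ j => f (p τ j)) t = (posDef p t).image f := by
  rw [posDef, posDef, Finset.biUnion_image]
  simp only [Finset.image_image]
  rfl

variable [Fintype V] [Fintype W]

lemma mem_spread {G : SimpleGraph V} {D B : Finset V} {v : V} :
    v ∈ spread G D B ↔ v ∈ B ∨ v ∉ D ∧ ∃ u ∈ B, G.Adj u v := by
  simp [spread]

section pburnt

variable {G : SimpleGraph V} {F : Finset V} {b : ℕ} {p : ℕ → Fin b → V}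

lemma pburnt_succ (t : ℕ) : pburnt G F p (t + 1) = spread G (posDef p t) (pburnt G F p t) := rfl

lemma pburnt_monotone : Monotone (pburnt G F p) :=
  monotone_nat_of_le_succ fun _ _ hv => mem_spread.2 (Or.inl hv)

lemma subset_pburnt (t : ℕ) : F ⊆ pburnt G F p t :=
  pburnt_monotone (Nat.zero_le t)

lemma mem_pburnt_succ_of_adj {t : ℕ} {u v : V} (hu : u ∈ pburnt G F p t) (huv : G.Adj u v)
    (hv : ∀ τ ≤ t, ∀ j, p τ j ≠ v) : v ∈ pburnt G F p (t + 1) :=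
  mem_spread.2 <| Or.inr ⟨fun h => by obtain ⟨τ, hτ, j, rfl⟩ := mem_posDef.1 h; exact hv τ hτ j rfl,
    u, hu, huv⟩

lemma PRMVS_eq_of_le_card {m : ℕ} (hp : ValidPR G F p)
    (hpm : (pburnt G F p (Fintype.card V)).card ≤ m)
    (hm : ∀ q : ℕ → Fin b → V, ValidPR G F q → m ≤ (pburnt G F q (Fintype.card V)).card) :
    PRMVS G F b = Fintype.card V - m := by
  refine le_antisymm (csSup_le ⟨_, p, hp, rfl⟩ ?_) (le_csSup_of_le ?_ ⟨p, hp, rfl⟩ (by omega))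
  · rintro k ⟨q, hq, rfl⟩
    have := hm q hq
    omega
  · exact ⟨Fintype.card V, by rintro k ⟨q, -, rfl⟩; omega⟩

lemma two_le_card_pburnt {s x y : V} (hx : G.Adj s x) (hy : G.Adj s y) (hxy : x ≠ y)
    (p : ℕ → Fin 1 → V) {t : ℕ} (ht : 1 ≤ t) : 2 ≤ (pburnt G {s} p t).card := by
  obtain ⟨z, hz, hpz⟩ : ∃ z, G.Adj s z ∧ p 0 0 ≠ z :=
    if h : p 0 0 = x then ⟨y, hy, h ▸ hxy⟩ else ⟨x, hx, h⟩
  have hz1 : z ∈ pburnt G {s} p 1 :=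
    mem_pburnt_succ_of_adj (subset_pburnt 0 (Finset.mem_singleton_self s)) hz
      fun τ hτ j => by rwa [Nat.le_zero.1 hτ, Subsingleton.elim j 0]
  calc 2 = ({s, z} : Finset V).card := (Finset.card_pair hz.ne).symm
    _ ≤ _ := Finset.card_le_card <| Finset.insert_subset
      (subset_pburnt t (Finset.mem_singleton_self s))
      (Finset.singleton_subset_iff.2 (pburnt_monotone ht hz1))

end pburnt

section Iso

variable {G : SimpleGraph V} {G' : SimpleGraph W} (e : G ≃g G')

lemma spread_image (D B : Finset V) :
    spread G' (D.image e) (B.image e) = (spread G D B).image e := by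
  ext w
  obtain ⟨v, rfl⟩ := e.surjective w
  simp [mem_spread, e.injective.mem_finset_image, e.map_adj_iff]

lemma pburnt_comp (F : Finset V) {b : ℕ} (p : ℕ → Fin b → V) (t : ℕ) :
    pburnt G' (F.image e) (fun τ j => e (p τ j)) t = (pburnt G F p t).image e := by
  induction t with
  | zero => rfl
  | succ t ih => rw [pburnt_succ, pburnt_succ, ih, posDef_comp, spread_image]

lemma card_pburnt_comp (F : Finset V) {b : ℕ} (p : ℕ → Fin b → V) (t : ℕ) :
    (pburnt G' (F.image e) (fun τ j => e (p τ j)) t).card = (pburnt G F p t).card := by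
  rw [pburnt_comp, Finset.card_image_of_injective _ e.injective]

lemma ValidPR.comp {F : Finset V} {b : ℕ} {p : ℕ → Fin b → V} (hp : ValidPR G F p) :
    ValidPR G' (F.image e) (fun τ j => e (p τ j)) := by
  refine ⟨fun t j => ?_, fun t j => ?_⟩
  · rw [pburnt_comp, e.injective.mem_finset_image]
    exact hp.1 t j
  · obtain ⟨w, hw⟩ := hp.2 t j
    refine ⟨w.map e.toHom, fun v hv => ?_⟩
    rw [Walk.support_map, List.mem_map] at hv
    obtain ⟨u, hu, rfl⟩ := hv
    change e u ∉ _
    rw [pburnt_comp, e.injective.mem_finset_image]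
    exact hw u hu

end Iso

section Path

variable {n : ℕ}

lemma pathGraph_mem_support_of_le_of_le {a b v : Fin n} (w : (pathGraph n).Walk a b) (hav : a ≤ v)
    (hvb : v ≤ b) : v ∈ w.support := by
  induction w with
  | nil => exact Walk.mem_support_nil_iff.2 (le_antisymm hvb hav)
  | @cons u x c hux w ih =>
    rcases eq_or_ne u v with rfl | huv
    · exact (Walk.cons hux w).start_mem_support
    · rw [pathGraph_adj] at hux
      have := Fin.val_ne_of_ne huv
      exact List.mem_cons_of_mem _ (ih (by rw [Fin.le_def] at hav ⊢; omega) hvb)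

def pathGraphRev : pathGraph n ≃g pathGraph n where
  toEquiv := Fin.revPerm
  map_rel_iff' := by
    intro u v
    simp only [Fin.revPerm_apply, pathGraph_adj, Fin.val_rev]
    omega

variable {F : Finset (Fin n)} {b : ℕ} {p : ℕ → Fin b → Fin n} {i : Fin n}

lemma ValidPR.rev (hp : ValidPR (pathGraph n) {i} p) :
    ValidPR (pathGraph n) {i.rev} (fun t j => (p t j).rev) :=
  hp.comp pathGraphRev

lemma card_pburnt_rev (t : ℕ) :
    (pburnt (pathGraph n) {i.rev} (fun t j => (p t j).rev) t).card =
      (pburnt (pathGraph n) {i} p t).card :=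
  card_pburnt_comp pathGraphRev {i} p t

lemma ValidPR.lt_of_lt_zero (hp : ValidPR (pathGraph n) F p) (hi : i ∈ F) {j : Fin b}
    (h0 : i < p 0 j) (t : ℕ) : i < p t j := by
  induction t with
  | zero => exact h0
  | succ t ih =>
    by_contra! hle
    obtain ⟨w, hw⟩ := hp.2 t j
    have hiw := pathGraph_mem_support_of_le_of_le w.reverse hle ih.le
    rw [Walk.support_reverse, List.mem_reverse] at hiw
    exact hw i hiw (subset_pburnt _ hi)

lemma mem_pburnt_pathGraph_of_forall_lt (hi : i ∈ F) (hp : ∀ t j, i < p t j) {v : Fin n} (t : ℕ)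
    (hvi : v ≤ i) (hit : i.val ≤ v.val + t) : v ∈ pburnt (pathGraph n) F p t := by
  induction t generalizing v with
  | zero => exact subset_pburnt 0 (le_antisymm hvi (Fin.le_def.2 hit) ▸ hi)
  | succ t ih =>
    rw [Fin.le_def] at hvi
    by_cases hv : i.val ≤ v.val + t
    · exact pburnt_monotone t.le_succ (ih (Fin.le_def.2 hvi) hv)
    · have hu : v.val + 1 < n := by omega
      refine mem_pburnt_succ_of_adj (u := ⟨v.val + 1, hu⟩) (ih (Fin.le_def.2 (by simp; omega))
        (by simp; omega)) (pathGraph_adj.2 (Or.inr rfl)) fun τ _ j hj => ?_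
      have := hp τ j
      rw [hj, Fin.lt_def] at this
      omega

lemma ValidPR.succ_le_card_pburnt_pathGraph {p : ℕ → Fin 1 → Fin n}
    (hp : ValidPR (pathGraph n) {i} p) (h0 : i < p 0 0) :
    i.val + 1 ≤ (pburnt (pathGraph n) {i} p n).card := by
  have hi := Finset.mem_singleton_self i
  have hp' : ∀ t j, i < p t j := fun t j => Subsingleton.elim 0 j ▸ hp.lt_of_lt_zero hi h0 t
  calc i.val + 1 = (Finset.Iic i).card := (Fin.card_Iic i).symm
    _ ≤ _ := Finset.card_le_card fun v hv =>
      mem_pburnt_pathGraph_of_forall_lt hi hp' n (Finset.mem_Iic.1 hv) (by omega)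

lemma ValidPR.min_le_card_pburnt_pathGraph {p : ℕ → Fin 1 → Fin n}
    (hp : ValidPR (pathGraph n) {i} p) :
    min (i.val + 1) (n - i.val) ≤ (pburnt (pathGraph n) {i} p n).card := by
  have hne : p 0 0 ≠ i := fun h => hp.1 0 0 (Finset.mem_singleton.2 h)
  rcases hne.lt_or_gt with h | h
  · have := hp.rev.succ_le_card_pburnt_pathGraph (Fin.rev_lt_rev.2 h)
    rw [card_pburnt_rev, Fin.val_rev] at this
    omega
  · exact (min_le_left _ _).trans (hp.succ_le_card_pburnt_pathGraph h)

lemma pburnt_pathGraph_const_subset_Iic (hi : i.val + 1 < n) (t : ℕ) :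
    pburnt (pathGraph n) {i} (fun _ (_ : Fin 1) => (⟨i.val + 1, hi⟩ : Fin n)) t ⊆
      Finset.Iic i := by
  induction t with
  | zero => exact Finset.singleton_subset_iff.2 (Finset.mem_Iic.2 le_rfl)
  | succ t ih =>
    intro v hv
    rcases mem_spread.1 hv with hv | ⟨hvD, u, hu, huv⟩
    · exact ih hv
    · have hv' : v.val ≠ i.val + 1 := fun h =>
        hvD (mem_posDef.2 ⟨0, t.zero_le, 0, Fin.ext h.symm⟩)
      have hu' := Finset.mem_Iic.1 (ih hu)
      rw [pathGraph_adj] at huv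
      rw [Finset.mem_Iic, Fin.le_def] at *
      omega

lemma exists_validPR_pathGraph_card_pburnt_le (hi : i.val + 1 < n) :
    ∃ p : ℕ → Fin 1 → Fin n, ValidPR (pathGraph n) {i} p ∧
      (pburnt (pathGraph n) {i} p n).card ≤ i.val + 1 := by
  have unburnt : ∀ t, (⟨i.val + 1, hi⟩ : Fin n) ∉ pburnt (pathGraph n) {i} _ t := fun t h => by
    have := Finset.mem_Iic.1 (pburnt_pathGraph_const_subset_Iic hi t h)
    rw [Fin.le_def] at this
    simp at this
  refine ⟨_, ⟨fun t _ => unburnt t, fun t _ => ⟨Walk.nil, fun v hv => ?_⟩⟩, ?_⟩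
  · rw [Walk.mem_support_nil_iff.1 hv]
    exact unburnt (t + 1)
  · exact (Finset.card_le_card (pburnt_pathGraph_const_subset_Iic hi n)).trans (Fin.card_Iic i).le

theorem PRMVS_pathGraph (hn : 2 ≤ n) (i : Fin n) :
    PRMVS (pathGraph n) {i} 1 = n - min (i.val + 1) (n - i.val) := by
  obtain ⟨p, hp, hpm⟩ : ∃ p : ℕ → Fin 1 → Fin n, ValidPR (pathGraph n) {i} p ∧
      (pburnt (pathGraph n) {i} p n).card ≤ min (i.val + 1) (n - i.val) := by
    by_cases hi : i.val + 1 ≤ n - i.val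
    · obtain ⟨p, hp, hpm⟩ := exists_validPR_pathGraph_card_pburnt_le (i := i) (by omega)
      exact ⟨p, hp, by omega⟩
    · obtain ⟨p, hp, hpm⟩ := exists_validPR_pathGraph_card_pburnt_le (i := i.rev) (by simp; omega)
      refine ⟨_, Fin.rev_rev i ▸ hp.rev, ?_⟩
      have := card_pburnt_rev (i := i.rev) (p := p) n
      rw [Fin.rev_rev] at this
      simp only [Fin.val_rev] at hpm
      omega
  simpa using PRMVS_eq_of_le_card hp (by simpa using hpm) fun q hq => by
    simpa using hq.min_le_card_pburnt_pathGraph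

end Path

section Cycle

def cycleGraphAddRight {n : ℕ} (s : Fin (n + 2)) : cycleGraph (n + 2) ≃g cycleGraph (n + 2) where
  toEquiv := Equiv.addRight s
  map_rel_iff' := by simp [cycleGraph_adj, add_sub_add_right_eq_sub]

lemma cycleGraphAddRight_apply {n : ℕ} (s v : Fin (n + 2)) : cycleGraphAddRight s v = v + s :=
  rfl

def cycleSevenStrategy : ℕ → Fin 1 → Fin 7 := fun t _ => if t = 0 then 6 else 2

lemma pburnt_cycleSevenStrategy_subset (t : ℕ) :
    pburnt (cycleGraph 7) {0} cycleSevenStrategy t ⊆ {0, 1} := by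
  have start : ∀ v : Fin 7, (cycleGraph 7).Adj 0 v → v ≠ 6 → v ∈ ({0, 1} : Finset (Fin 7)) := by
    decide
  have closed : ∀ u v : Fin 7, u ∈ ({0, 1} : Finset (Fin 7)) → (cycleGraph 7).Adj u v →
      v ≠ 6 → v ≠ 2 → v ∈ ({0, 1} : Finset (Fin 7)) := by
    decide
  induction t with
  | zero => simp [pburnt]
  | succ t ih =>
    intro v hv
    rcases mem_spread.1 hv with hv | ⟨hvD, u, hu, huv⟩
    · exact ih hv
    · have h6 : v ≠ 6 := fun h => hvD (mem_posDef.2 ⟨0, t.zero_le, 0, h ▸ rfl⟩)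
      rcases t with _ | t
      · exact start v (Finset.mem_singleton.1 hu ▸ huv) h6
      · exact closed u v (ih hu) huv h6 fun h => hvD (mem_posDef.2 ⟨1, by omega, 0, h ▸ rfl⟩)

lemma validPR_cycleSevenStrategy : ValidPR (cycleGraph 7) {0} cycleSevenStrategy := by
  have hsafe : ∀ t, ∀ v ∈ ({6, 5, 4, 3, 2} : Finset (Fin 7)),
      v ∉ pburnt (cycleGraph 7) {0} cycleSevenStrategy t := by
    have disjoint : ∀ v ∈ ({6, 5, 4, 3, 2} : Finset (Fin 7)), v ∉ ({0, 1} : Finset (Fin 7)) := by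
      decide
    exact fun t v hv hvb => disjoint v hv (pburnt_cycleSevenStrategy_subset t hvb)
  have hpos : ∀ t j, cycleSevenStrategy t j ∈ ({6, 5, 4, 3, 2} : Finset (Fin 7)) := by
    intro t j
    unfold cycleSevenStrategy
    split_ifs <;> decide
  obtain ⟨w, hw⟩ : ∃ w : (cycleGraph 7).Walk 6 2,
      ∀ v ∈ w.support, v ∈ ({6, 5, 4, 3, 2} : Finset (Fin 7)) :=
    ⟨.cons (by decide : (cycleGraph 7).Adj 6 5) <| .cons (by decide : (cycleGraph 7).Adj 5 4) <|
      .cons (by decide : (cycleGraph 7).Adj 4 3) <|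
      .cons (by decide : (cycleGraph 7).Adj 3 2) .nil, by decide⟩
  refine ⟨fun t j => hsafe t _ (hpos t j), fun t j => ?_⟩
  rcases t with _ | t
  · exact ⟨w, fun v hv => hsafe 1 v (hw v hv)⟩
  · exact ⟨.nil, fun v hv => hsafe _ v (Walk.mem_support_nil_iff.1 hv ▸ hpos _ j)⟩

theorem PRMVS_cycleGraph_seven (s : Fin 7) : PRMVS (cycleGraph 7) {s} 1 = 5 := by
  have hne : s + 1 ≠ s - 1 := by revert s; decide
  have hs : ({s} : Finset (Fin 7)) = ({0} : Finset (Fin 7)).image (cycleGraphAddRight s) := by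
    simp [cycleGraphAddRight_apply]
  rw [hs]
  refine PRMVS_eq_of_le_card (m := 2) (validPR_cycleSevenStrategy.comp _) ?_ fun q _ => ?_
  · rw [Fintype.card_fin, card_pburnt_comp]
    exact (Finset.card_le_card (pburnt_cycleSevenStrategy_subset 7)).trans (by decide)
  · rw [← hs]
    exact two_le_card_pburnt (x := s + 1) (y := s - 1) (by simp [cycleGraph_adj])
      (by simp [cycleGraph_adj]) hne q (by simp)

end Cycle

end FF

open FF

theorem stmt4 :
    (∀ i : Fin 7, 7 - FF.PRMVS (SimpleGraph.pathGraph 7) {i} 1 = min ((i : ℕ) + 1) (7 - (i : ℕ))) ∧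
    (∑ i : Fin 7, (7 - FF.PRMVS (SimpleGraph.pathGraph 7) {i} 1)) = 16 ∧
    (∑ s : Fin 7, ((7 : ℚ) - FF.PRMVS (SimpleGraph.cycleGraph 7) {s} 1)) / 7 <
      (∑ i : Fin 7, ((7 : ℚ) - FF.PRMVS (SimpleGraph.pathGraph 7) {i} 1)) / 7 := by
  have hpath : ∀ i : Fin 7, PRMVS (pathGraph 7) {i} 1 = 7 - min (i.val + 1) (7 - i.val) :=
    PRMVS_pathGraph (by norm_num)
  refine ⟨fun i => by rw [hpath]; omega, ?_, ?_⟩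
  · simp [Fin.sum_univ_seven, hpath]
  · simp [Fin.sum_univ_seven, hpath, PRMVS_cycleGraph_seven]
    norm_num
end

section
/- Fix $b \geq 1$. Let $G_\ell$ be constructed by joining each vertex of a connected graph $G_B$ on exactly $b+1$ vertices to a distinct vertex of a connected graph $G_A$ on at least $b+1$ vertices via internally disjoint paths with $\ell$ internal vertices each. Then in the path-restricted game with $b$ fires and $b$ firefighters and unlimited movement distance, the total burnt count over all $\binom{|V(G_\ell)|}{b}$ initial configurations is $O(\ell^b)$: configurations with some fire within distance 1 of $V(G_A) \cup V(G_B)$ number $O(\ell^{b-1})$ and each burns $O(\ell)$ vertices, while in all remaining configurations at most $2b$ vertices burn. -/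
open SimpleGraph Finset
open scoped Classical

open FF

/-- One-directional edge description of the construction `G_ℓ`: the disjoint
union of `G_A`, `G_B` and, for each vertex `w` of `G_B`, a path with `ℓ`
internal vertices joining `f w ∈ G_A` to `w ∈ G_B`. -/
def glink {A B : Type*} (GA : SimpleGraph A) (GB : SimpleGraph B) (f : B → A) (ℓ : ℕ) :
    (A ⊕ B ⊕ (B × Fin ℓ)) → (A ⊕ B ⊕ (B × Fin ℓ)) → Prop
  | Sum.inl a, Sum.inl a2 => GA.Adj a a2
  | Sum.inr (Sum.inl b1), Sum.inr (Sum.inl b2) => GB.Adj b1 b2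
  | Sum.inl a, Sum.inr (Sum.inr x) => a = f x.1 ∧ (x.2 : ℕ) = 0
  | Sum.inr (Sum.inr x), Sum.inr (Sum.inr y) => x.1 = y.1 ∧ (y.2 : ℕ) = (x.2 : ℕ) + 1
  | Sum.inr (Sum.inl b1), Sum.inr (Sum.inr x) => b1 = x.1 ∧ (x.2 : ℕ) = ℓ - 1
  | _, _ => False

/-- The graph `G_ℓ` of the construction. -/
def Gconn {A B : Type*} (GA : SimpleGraph A) (GB : SimpleGraph B) (f : B → A) (ℓ : ℕ) :
    SimpleGraph (A ⊕ B ⊕ (B × Fin ℓ)) where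
  Adj x y := glink GA GB f ℓ x y ∨ glink GA GB f ℓ y x
  symm := ⟨fun x y h => h.symm⟩
  loopless := ⟨by
    rintro (a | b | x) h
    · exact GA.loopless.irrefl a (by rcases h with h | h <;> exact h)
    · exact GB.loopless.irrefl b (by rcases h with h | h <;> exact h)
    · rcases h with h | h <;> exact absurd h.2 (by omega)⟩


/-!
Call a configuration scattered if every fire is an internal path vertex at distance at least two
from `G_A` and three from `G_B`, and fires on a common path are at least three apart. With `b`
fires on `b + 1` paths some path is fire-free. Against a scattered configuration one firefighter
per fire first defends the neighbour of its fire towards `G_A`. Next turn it moves to the vertex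
two above the nearest fire below it, walking down its path; the firefighter of the lowest fire on
a path instead goes round through `G_A`, the fire-free path and `G_B` to the vertex two above the
highest fire there. Each fire then burns at most one further vertex, so at most `2b` burn.

A configuration that is not scattered contains one of the `O(1)` vertices near `G_A ∪ G_B` or one
of the `O(n)` pairs of vertices at distance at most two on a path, so there are `O(n^(b-1))` of
them, each burning at most `n = O(ℓ)` vertices.
-/

namespace SimpleGraph

variable {V W : Type*} {G : SimpleGraph V} {H : SimpleGraph W} {S : Set V} {x y z : V}

def ReachableAvoiding (G : SimpleGraph V) (S : Set V) (x y : V) : Prop :=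
  ∃ p : G.Walk x y, ∀ v ∈ p.support, v ∉ S

theorem ReachableAvoiding.refl (hx : x ∉ S) : G.ReachableAvoiding S x x :=
  ⟨.nil, by simpa using hx⟩

theorem ReachableAvoiding.symm : G.ReachableAvoiding S x y → G.ReachableAvoiding S y x
  | ⟨p, hp⟩ => ⟨p.reverse, by simpa using hp⟩

theorem ReachableAvoiding.trans :
    G.ReachableAvoiding S x y → G.ReachableAvoiding S y z → G.ReachableAvoiding S x z
  | ⟨p, hp⟩, ⟨q, hq⟩ => ⟨p.append q, by
      simp only [Walk.mem_support_append_iff]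
      rintro v (hv | hv)
      exacts [hp v hv, hq v hv]⟩

theorem Adj.reachableAvoiding (h : G.Adj x y) (hx : x ∉ S) (hy : y ∉ S) :
    G.ReachableAvoiding S x y :=
  ⟨h.toWalk, by simp [hx, hy]⟩

theorem Preconnected.reachableAvoiding_map (hH : H.Preconnected) (φ : H →g G)
    (hφ : ∀ a, φ a ∉ S) (a a' : W) : G.ReachableAvoiding S (φ a) (φ a') :=
  ⟨(hH a a').some.map φ, by simpa [Walk.support_map] using fun b _ => hφ b⟩

end SimpleGraph

namespace FF

variable {V : Type*} [Fintype V] [DecidableEq V] {G : SimpleGraph V} {F : Finset V} {b : ℕ}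

theorem spread_subset {D X S : Finset V} (hX : X ⊆ S)
    (h : ∀ u ∈ X, ∀ v, G.Adj u v → v ∉ D → v ∈ S) : spread G D X ⊆ S := by
  intro v hv
  rcases mem_union.1 hv with hv | hv
  · exact hX hv
  · obtain ⟨-, hvD, u, hu, huv⟩ := mem_filter.1 hv
    exact h u hu v huv hvD

theorem card_sub_card_pburnt_le_PRMVS {p : ℕ → Fin b → V} (hp : ValidPR G F p) :
    Fintype.card V - (pburnt G F p (Fintype.card V)).card ≤ PRMVS G F b :=
  le_csSup ⟨Fintype.card V, by rintro k ⟨p, -, rfl⟩; exact Nat.sub_le _ _⟩ ⟨p, hp, rfl⟩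

/-- The firefighters first stand on `p₀`, then move once to `p₁` and stay there. -/
theorem card_sub_PRMVS_le_of_twoMoves {ι : Type*} (e : ι ≃ Fin b) (p₀ p₁ : ι → V)
    {S : Finset V} (hF : F ⊆ S) (h₀ : ∀ u ∈ F, ∀ v, G.Adj u v → v ∈ S ∨ v ∈ Set.range p₀)
    (h₁ : ∀ u ∈ S, ∀ v, G.Adj u v → v ∈ S ∨ v ∈ Set.range p₀ ∨ v ∈ Set.range p₁)
    (hwalk : ∀ i, G.ReachableAvoiding S (p₀ i) (p₁ i)) :
    Fintype.card V - PRMVS G F b ≤ S.card := by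
  set p : ℕ → Fin b → V := fun t => if t = 0 then p₀ ∘ e.symm else p₁ ∘ e.symm
  have hp₀ : p 0 = p₀ ∘ e.symm := if_pos rfl
  have hp₁ : ∀ t, p (t + 1) = p₁ ∘ e.symm := fun t => if_neg t.succ_ne_zero
  have hdef₀ : ∀ t i, p₀ i ∈ posDef p t := fun t i =>
    mem_biUnion.2 ⟨0, by simp, mem_image.2 ⟨e i, mem_univ _, by simp [hp₀]⟩⟩
  have hdef₁ : ∀ t i, p₁ i ∈ posDef p (t + 1) := fun t i =>
    mem_biUnion.2 ⟨1, by simp, mem_image.2 ⟨e i, mem_univ _, by simp [hp₁]⟩⟩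
  have hburnt : ∀ t, pburnt G F p t ⊆ S := by
    intro t
    induction t with
    | zero => exact hF
    | succ t ih =>
      refine spread_subset ih fun u hu v huv hv => ?_
      rcases t with _ | t
      · obtain h | ⟨i, rfl⟩ := h₀ u hu v huv
        exacts [h, absurd (hdef₀ 0 i) hv]
      · obtain h | ⟨i, rfl⟩ | ⟨i, rfl⟩ := h₁ u (ih hu) v huv
        exacts [h, absurd (hdef₀ _ i) hv, absurd (hdef₁ t i) hv]
  have hout : ∀ i, p₀ i ∉ S ∧ p₁ i ∉ S := fun i =>
    let ⟨q, hq⟩ := hwalk i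
    ⟨hq _ q.start_mem_support, hq _ q.end_mem_support⟩
  have hvalid : ValidPR G F p := by
    refine ⟨fun t i hi => ?_, fun t i => ?_⟩
    · rcases t with _ | t
      · rw [hp₀] at hi
        exact (hout _).1 (hF hi)
      · rw [hp₁] at hi
        exact (hout _).2 (hburnt _ hi)
    · rcases t with _ | t
      · rw [hp₀, hp₁]
        obtain ⟨q, hq⟩ := hwalk (e.symm i)
        exact ⟨q, fun v hv hb => hq v hv (hburnt 1 hb)⟩
      · rw [hp₁, hp₁]
        exact ⟨.nil, by simpa using fun hb => (hout _).2 (hburnt _ hb)⟩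
  have := card_sub_card_pburnt_le_PRMVS hvalid
  have := card_le_card (hburnt (Fintype.card V))
  omega

end FF

namespace Finset

variable {α : Type*} [LinearOrder α] [OrderBot α] {s : Finset α} {a c : α}

def cyclicPred (s : Finset α) (a : α) : α :=
  if (s.filter (· < a)).Nonempty then (s.filter (· < a)).sup id else s.sup id

theorem cyclicPred_mem (ha : a ∈ s) : s.cyclicPred a ∈ s := by
  unfold cyclicPred
  split_ifs with h
  · obtain ⟨c, hc, hc'⟩ := exists_mem_eq_sup _ h id
    exact hc' ▸ (mem_filter.1 hc).1
  · obtain ⟨c, hc, hc'⟩ := exists_mem_eq_sup _ ⟨a, ha⟩ id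
    exact hc' ▸ hc

theorem cyclicPred_spec :
    (s.cyclicPred a < a ∧ ∀ x ∈ s, x < a → x ≤ s.cyclicPred a) ∨
      ∀ x ∈ s, a ≤ x ∧ x ≤ s.cyclicPred a := by
  unfold cyclicPred
  split_ifs with h
  · obtain ⟨c, hc, hc'⟩ := exists_mem_eq_sup _ h id
    exact .inl ⟨hc' ▸ (mem_filter.1 hc).2,
      fun x hx hxa => le_sup (f := id) (mem_filter.2 ⟨hx, hxa⟩)⟩
  · exact .inr fun x hx =>
      ⟨not_lt.1 fun hxa => h ⟨x, mem_filter.2 ⟨hx, hxa⟩⟩, le_sup (f := id) hx⟩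

theorem exists_cyclicPred_eq (hc : c ∈ s) : ∃ a ∈ s, s.cyclicPred a = c := by
  by_cases hup : ∃ x ∈ s, c < x
  · obtain ⟨x, hx, hcx⟩ := hup
    have hne : (s.filter (c < ·)).Nonempty := ⟨x, mem_filter.2 ⟨hx, hcx⟩⟩
    obtain ⟨has, hca⟩ := mem_filter.1 (min'_mem _ hne)
    refine ⟨_, has, ?_⟩
    rw [cyclicPred, if_pos ⟨c, mem_filter.2 ⟨hc, hca⟩⟩]
    refine le_antisymm (Finset.sup_le fun y hy => ?_) (le_sup (f := id) (mem_filter.2 ⟨hc, hca⟩))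
    obtain ⟨hy, hya⟩ := mem_filter.1 hy
    exact not_lt.1 fun hcy => (min'_le _ y (mem_filter.2 ⟨hy, hcy⟩)).not_gt hya
  · push Not at hup
    refine ⟨s.min' ⟨c, hc⟩, min'_mem _ _, ?_⟩
    rw [cyclicPred, if_neg]
    · exact le_antisymm (Finset.sup_le hup) (le_sup (f := id) hc)
    · rintro ⟨y, hy⟩
      obtain ⟨hy, hlt⟩ := mem_filter.1 hy
      exact (min'_le s y hy).not_gt hlt

end Finset

section Counting

variable {α : Type*} [Fintype α] [DecidableEq α]

theorem card_filter_superset_mul_pow_le (T : Finset α) (b : ℕ) :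
    ((univ.powersetCard b).filter (T ⊆ ·)).card * Fintype.card α ^ T.card ≤
      Fintype.card α ^ b := by
  by_cases hT : T.card ≤ b
  · calc _ ≤ (univ.powersetCard (b - T.card) : Finset (Finset α)).card *
            Fintype.card α ^ T.card := by
          refine Nat.mul_le_mul_right _ (card_le_card_of_injOn (· \ T) (fun F hF => ?_)
            fun F hF F' hF' h => ?_)
          · obtain ⟨hF, hTF⟩ := mem_filter.1 hF
            rw [mem_powersetCard] at hF
            rw [mem_coe, mem_powersetCard]
            exact ⟨subset_univ _, by rw [card_sdiff_of_subset hTF, hF.2]⟩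
          · rw [← sdiff_union_of_subset (mem_filter.1 hF).2,
              ← sdiff_union_of_subset (mem_filter.1 hF').2]
            exact congrArg (· ∪ T) h
      _ ≤ Fintype.card α ^ (b - T.card) * Fintype.card α ^ T.card := by
          rw [card_powersetCard, card_univ]
          gcongr
          exact Nat.choose_le_pow _ _
      _ = _ := pow_sub_mul_pow _ hT
  · rw [filter_eq_empty_iff.2 fun F hF hTF => hT ?_, card_empty, zero_mul]
    · exact Nat.zero_le _
    · exact (card_le_card hTF).trans (mem_powersetCard.1 hF).2.le

theorem card_mul_sum_card_filter_pair_le {b m : ℕ} (close : α → Finset α)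
    (hclose : ∀ x, (close x).card ≤ m) :
    Fintype.card α * ∑ x, ∑ y ∈ (close x).erase x,
      ((univ.powersetCard b).filter ({x, y} ⊆ ·)).card ≤ m * Fintype.card α ^ b := by
  set n := Fintype.card α
  rcases Nat.eq_zero_or_pos n with hn | hn
  · simp [hn]
  have hpair : ∀ x y : α, x ≠ y →
      n * (n * ((univ.powersetCard b).filter ({x, y} ⊆ ·)).card) ≤ n ^ b :=
    fun x y hxy => by
      have := card_filter_superset_mul_pow_le {x, y} b
      rwa [card_pair hxy, sq, mul_comm, mul_assoc] at this
  refine Nat.le_of_mul_le_mul_left ?_ hn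
  simp only [mul_sum]
  calc _ ≤ ∑ _x : α, m * n ^ b := sum_le_sum fun x _ => by
          refine (sum_le_sum fun y hy => hpair x y (ne_of_mem_erase hy).symm).trans ?_
          rw [sum_const, smul_eq_mul]
          exact Nat.mul_le_mul_right _ (card_erase_le.trans (hclose x))
    _ = n * (m * n ^ b) := by rw [sum_const, card_univ, smul_eq_mul]

theorem card_mul_card_le_of_exists_mem_or_close_pair {b m : ℕ} (N : Finset α)
    (close : α → Finset α) (hclose : ∀ x, (close x).card ≤ m) {𝓑 : Finset (Finset α)}
    (h𝓑 : 𝓑 ⊆ univ.powersetCard b)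
    (hbad : ∀ F ∈ 𝓑, (∃ x ∈ F, x ∈ N) ∨ ∃ x ∈ F, ∃ y ∈ F, x ≠ y ∧ y ∈ close x) :
    Fintype.card α * 𝓑.card ≤ (N.card + m) * Fintype.card α ^ b := by
  set n := Fintype.card α
  set P := (univ : Finset α).powersetCard b
  set c : Finset α → ℕ := fun T => (P.filter (T ⊆ ·)).card
  have hsingle : ∀ x, n * c {x} ≤ n ^ b := fun x => by
    have := card_filter_superset_mul_pow_le {x} b
    rwa [card_singleton, pow_one, mul_comm] at this
  have hcover : 𝓑 ⊆ N.biUnion (fun x => P.filter ({x} ⊆ ·)) ∪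
      univ.biUnion fun x => ((close x).erase x).biUnion fun y => P.filter ({x, y} ⊆ ·) := by
    intro F hF
    rcases hbad F hF with ⟨x, hxF, hxN⟩ | ⟨x, hxF, y, hyF, hxy, hy⟩
    · exact mem_union_left _ (mem_biUnion.2 ⟨x, hxN, mem_filter.2 ⟨h𝓑 hF, by simpa using hxF⟩⟩)
    · refine mem_union_right _ (mem_biUnion.2 ⟨x, mem_univ _, mem_biUnion.2 ⟨y,
        mem_erase.2 ⟨hxy.symm, hy⟩, mem_filter.2 ⟨h𝓑 hF, ?_⟩⟩⟩)
      simp [insert_subset_iff, hxF, hyF]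
  calc n * 𝓑.card ≤ n * (∑ x ∈ N, c {x} + ∑ x, ∑ y ∈ (close x).erase x, c {x, y}) := by
        gcongr
        exact (card_le_card hcover).trans ((card_union_le _ _).trans (add_le_add card_biUnion_le
          (card_biUnion_le.trans (sum_le_sum fun _ _ => card_biUnion_le))))
    _ ≤ N.card * n ^ b + m * n ^ b := by
        rw [mul_add, mul_sum]
        exact add_le_add ((sum_le_sum fun x _ => hsingle x).trans (by simp))
          (card_mul_sum_card_filter_pair_le close hclose)
    _ = _ := by ring

theorem sum_powersetCard_le_of_exists_mem_or_close_pair {b c m : ℕ} (N : Finset α)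
    (close : α → Finset α) (hclose : ∀ x, (close x).card ≤ m) (Good : Finset α → Prop)
    (g : Finset α → ℕ) (hgood : ∀ F ∈ univ.powersetCard b, Good F → g F ≤ c)
    (hg : ∀ F, g F ≤ Fintype.card α)
    (hbad : ∀ F ∈ univ.powersetCard b, ¬ Good F →
      (∃ x ∈ F, x ∈ N) ∨ ∃ x ∈ F, ∃ y ∈ F, x ≠ y ∧ y ∈ close x) :
    ∑ F ∈ univ.powersetCard b, g F ≤ (c + N.card + m) * Fintype.card α ^ b := by
  set P := (univ : Finset α).powersetCard b
  have hbad' := card_mul_card_le_of_exists_mem_or_close_pair N close hclose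
    (filter_subset (¬ Good ·) P) fun F hF => hbad F (mem_filter.1 hF).1 (mem_filter.1 hF).2
  have hP : P.card ≤ Fintype.card α ^ b := by
    rw [card_powersetCard, card_univ]
    exact Nat.choose_le_pow _ _
  rw [← sum_filter_add_sum_filter_not P Good]
  calc _ ≤ (P.filter Good).card * c + (P.filter (¬ Good ·)).card * Fintype.card α :=
        add_le_add (sum_le_card_nsmul _ _ _ fun F hF => hgood F (mem_filter.1 hF).1
          (mem_filter.1 hF).2) (sum_le_card_nsmul _ _ _ fun F _ => hg F)
    _ ≤ Fintype.card α ^ b * c + (N.card + m) * Fintype.card α ^ b := by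
        rw [mul_comm _ (Fintype.card α)]
        exact add_le_add (Nat.mul_le_mul_right _ ((card_filter_le _ _).trans hP)) hbad'
    _ = _ := by ring

end Counting

section Construction

variable {A B : Type*} {ℓ : ℕ}

/-- The internal vertices of the path attached to `w` are `pathVertex w j`, `j < ℓ`, numbered from
the `G_A` end; every index `j ≥ ℓ` denotes the end `w` of that path in `G_B`. -/
def pathVertex (w : B) (j : ℕ) : A ⊕ B ⊕ (B × Fin ℓ) :=
  if h : j < ℓ then Sum.inr (Sum.inr (w, ⟨j, h⟩)) else Sum.inr (Sum.inl w)

theorem pathVertex_of_lt {w : B} {j : ℕ} (h : j < ℓ) :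
    (pathVertex w j : A ⊕ B ⊕ (B × Fin ℓ)) = Sum.inr (Sum.inr (w, ⟨j, h⟩)) :=
  dif_pos h

theorem pathVertex_of_le {w : B} {j : ℕ} (h : ℓ ≤ j) :
    (pathVertex w j : A ⊕ B ⊕ (B × Fin ℓ)) = Sum.inr (Sum.inl w) :=
  dif_neg h.not_gt

theorem pathVertex_ne_inl (w : B) (j : ℕ) (a : A) :
    (pathVertex w j : A ⊕ B ⊕ (B × Fin ℓ)) ≠ Sum.inl a := by
  unfold pathVertex
  split_ifs <;> simp

theorem eq_of_pathVertex_eq {w w' : B} {j j' : ℕ}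
    (h : (pathVertex w j : A ⊕ B ⊕ (B × Fin ℓ)) = pathVertex w' j') : w = w' := by
  unfold pathVertex at h
  split_ifs at h <;> simp_all

theorem pathVertex_eq_pathVertex_iff {w w' : B} {j j' : ℕ} (h : j' < ℓ) :
    (pathVertex w j : A ⊕ B ⊕ (B × Fin ℓ)) = pathVertex w' j' ↔ w = w' ∧ j = j' := by
  refine ⟨fun he => ⟨eq_of_pathVertex_eq he, ?_⟩, by rintro ⟨rfl, rfl⟩; rfl⟩
  rw [pathVertex_of_lt h] at he
  unfold pathVertex at he
  split_ifs at he <;> simp_all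

def pathSucc : A ⊕ B ⊕ (B × Fin ℓ) → A ⊕ B ⊕ (B × Fin ℓ)
  | Sum.inr (Sum.inr (w, j)) => pathVertex w (j + 1)
  | v => v

theorem pathSucc_pathVertex {w : B} {j : ℕ} (h : j < ℓ) :
    pathSucc (pathVertex w j : A ⊕ B ⊕ (B × Fin ℓ)) = pathVertex w (j + 1) := by
  rw [pathVertex_of_lt h]
  rfl

theorem exists_forall_pathVertex_notMem [Fintype B] {F : Finset (A ⊕ B ⊕ (B × Fin ℓ))}
    (hF : F.card < Fintype.card B) :
    ∃ w₀ : B, ∀ j, pathVertex w₀ j ∉ F := by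
  by_contra! h
  choose g hg using h
  have := Fintype.card_le_of_injective (fun w => (⟨pathVertex w (g w), hg w⟩ : F))
    fun w w' h => eq_of_pathVertex_eq (congrArg Subtype.val h)
  rw [Fintype.card_coe] at this
  omega

namespace Gconn

variable {GA : SimpleGraph A} {GB : SimpleGraph B} {f : B → A}

theorem adj_pathVertex_succ (w : B) {j : ℕ} (h : j < ℓ) :
    (Gconn GA GB f ℓ).Adj (pathVertex w j) (pathVertex w (j + 1)) := by
  rw [pathVertex_of_lt h]
  by_cases h' : j + 1 < ℓ
  · rw [pathVertex_of_lt h']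
    exact Or.inl ⟨rfl, rfl⟩
  · rw [pathVertex_of_le (not_lt.1 h')]
    exact Or.inr ⟨rfl, show j = ℓ - 1 by omega⟩

theorem adj_inl_pathVertex_zero (w : B) (h : 0 < ℓ) :
    (Gconn GA GB f ℓ).Adj (Sum.inl (f w)) (pathVertex w 0) := by
  rw [pathVertex_of_lt h]
  exact Or.inl ⟨rfl, rfl⟩

theorem eq_pathVertex_of_adj {w : B} {j : ℕ} (h₀ : 0 < j) (hj : j < ℓ) {v : A ⊕ B ⊕ (B × Fin ℓ)}
    (h : (Gconn GA GB f ℓ).Adj (pathVertex w j) v) :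
    v = pathVertex w (j - 1) ∨ v = pathVertex w (j + 1) := by
  rw [pathVertex_of_lt hj] at h
  rcases v with a | w' | ⟨w', j'⟩
  · rcases h with h | h
    · exact h.elim
    · exact absurd h.2 (by simp; omega)
  · rcases h with h | ⟨rfl, h⟩
    · exact h.elim
    · exact .inr (pathVertex_of_le (by simp at h; omega)).symm
  · have := j'.isLt
    rcases h with ⟨rfl, h⟩ | ⟨rfl, h⟩ <;> simp only at h
    · exact .inr (by rw [pathVertex_of_lt (by omega)]; simp [Fin.ext_iff]; omega)
    · exact .inl (by rw [pathVertex_of_lt (by omega)]; simp [Fin.ext_iff]; omega)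

theorem reachableAvoiding_pathVertex {S : Set (A ⊕ B ⊕ (B × Fin ℓ))} (w : B) {i k : ℕ}
    (hik : i ≤ k) (hk : k ≤ ℓ) (hS : ∀ t, i ≤ t → t ≤ k → pathVertex w t ∉ S) :
    (Gconn GA GB f ℓ).ReachableAvoiding S (pathVertex w i) (pathVertex w k) := by
  induction k, hik using Nat.le_induction with
  | base => exact .refl (hS i le_rfl le_rfl)
  | succ k hik ih =>
    exact (ih (by omega) fun t h₁ h₂ => hS t h₁ (by omega)).trans
      ((adj_pathVertex_succ w (by omega)).reachableAvoiding (hS k hik (by omega))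
        (hS (k + 1) (by omega) le_rfl))

theorem reachableAvoiding_inl_pathVertex_length (hGA : GA.Preconnected) (hGB : GB.Preconnected)
    (hℓ : 0 < ℓ) {S : Set (A ⊕ B ⊕ (B × Fin ℓ))} (hA : ∀ a, Sum.inl a ∉ S)
    (hB : ∀ w, pathVertex w ℓ ∉ S) {w₀ : B} (hw₀ : ∀ j, pathVertex w₀ j ∉ S) (w : B) :
    (Gconn GA GB f ℓ).ReachableAvoiding S (Sum.inl (f w)) (pathVertex w ℓ) := by
  have hGA' :=
    hGA.reachableAvoiding_map (⟨Sum.inl, Or.inl⟩ : GA →g Gconn GA GB f ℓ) hA (f w) (f w₀)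
  have hGB' := hGB.reachableAvoiding_map
    (⟨fun w => Sum.inr (Sum.inl w), Or.inl⟩ : GB →g Gconn GA GB f ℓ)
    (fun w => pathVertex_of_le (le_refl ℓ) ▸ hB w) w₀ w
  simp only [RelHom.coeFn_mk, ← pathVertex_of_le (le_refl ℓ)] at hGB'
  exact hGA'.trans <| ((adj_inl_pathVertex_zero w₀ hℓ).reachableAvoiding (hA _) (hw₀ 0)).trans <|
    (reachableAvoiding_pathVertex w₀ (Nat.zero_le _) le_rfl fun t _ _ => hw₀ t).trans hGB'

end Gconn

end Construction

section Configurations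

variable {A B : Type*} [DecidableEq A] [DecidableEq B] {ℓ : ℕ}
  {F : Finset (A ⊕ B ⊕ (B × Fin ℓ))}

def fireIndices (F : Finset (A ⊕ B ⊕ (B × Fin ℓ))) (w : B) : Finset ℕ :=
  (range ℓ).filter fun k => pathVertex w k ∈ F

def burnRegion (F : Finset (A ⊕ B ⊕ (B × Fin ℓ))) : Finset (A ⊕ B ⊕ (B × Fin ℓ)) :=
  F ∪ F.image pathSucc

def IsScattered (F : Finset (A ⊕ B ⊕ (B × Fin ℓ))) : Prop :=
  (∀ x ∈ F, ∃ w, ∃ j < ℓ, x = pathVertex w j) ∧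
    ∀ w, ∀ k ∈ fireIndices F w, 1 ≤ k ∧ k + 3 ≤ ℓ ∧ ∀ k' ∈ fireIndices F w, k < k' → k + 3 ≤ k'

noncomputable def hubNbhd [Fintype A] [Fintype B] : Finset (A ⊕ B ⊕ (B × Fin ℓ)) :=
  univ.filter fun v => ∀ w j, v = pathVertex w j → j = 0 ∨ ℓ < j + 3

theorem mem_fireIndices {w : B} {k : ℕ} : k ∈ fireIndices F w ↔ k < ℓ ∧ pathVertex w k ∈ F := by
  simp [fireIndices]

theorem card_burnRegion_le : (burnRegion F).card ≤ 2 * F.card :=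
  (card_union_le _ _).trans (by have := card_image_le (s := F) (f := pathSucc); omega)

theorem mem_burnRegion (hF : ∀ x ∈ F, ∃ w, ∃ j < ℓ, x = pathVertex w j)
    {v : A ⊕ B ⊕ (B × Fin ℓ)} :
    v ∈ burnRegion F ↔
      ∃ w, ∃ k ∈ fireIndices F w, v = pathVertex w k ∨ v = pathVertex w (k + 1) := by
  constructor
  · intro hv
    rcases mem_union.1 hv with hv | hv
    · obtain ⟨w, j, hj, rfl⟩ := hF v hv
      exact ⟨w, j, mem_fireIndices.2 ⟨hj, hv⟩, .inl rfl⟩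
    · obtain ⟨u, hu, rfl⟩ := mem_image.1 hv
      obtain ⟨w, j, hj, rfl⟩ := hF u hu
      exact ⟨w, j, mem_fireIndices.2 ⟨hj, hu⟩, .inr (pathSucc_pathVertex hj)⟩
  · rintro ⟨w, k, hk, rfl | rfl⟩ <;> obtain ⟨hkℓ, hkF⟩ := mem_fireIndices.1 hk
    · exact mem_union_left _ hkF
    · exact mem_union_right _ (mem_image.2 ⟨_, hkF, pathSucc_pathVertex hkℓ⟩)

namespace IsScattered

theorem inl_notMem_burnRegion (hF : IsScattered F) (a : A) : Sum.inl a ∉ burnRegion F := by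
  rw [mem_burnRegion hF.1]
  rintro ⟨w, k, -, h | h⟩ <;> exact pathVertex_ne_inl _ _ _ h.symm

theorem pathVertex_mem_burnRegion (hF : IsScattered F) {w : B} {t : ℕ} :
    pathVertex w t ∈ burnRegion F ↔ ∃ k ∈ fireIndices F w, t = k ∨ t = k + 1 := by
  rw [mem_burnRegion hF.1]
  constructor
  · rintro ⟨w', k, hk, h | h⟩ <;> obtain ⟨-, hk3, -⟩ := hF.2 w' k hk
    · obtain ⟨rfl, rfl⟩ := (pathVertex_eq_pathVertex_iff (by omega)).1 h
      exact ⟨t, hk, .inl rfl⟩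
    · obtain ⟨rfl, rfl⟩ := (pathVertex_eq_pathVertex_iff (by omega)).1 h
      exact ⟨k, hk, .inr rfl⟩
  · rintro ⟨k, hk, rfl | rfl⟩
    exacts [⟨w, _, hk, .inl rfl⟩, ⟨w, _, hk, .inr rfl⟩]

theorem adj_of_mem (hF : IsScattered F) {GA : SimpleGraph A} {GB : SimpleGraph B} {f : B → A}
    {u v : A ⊕ B ⊕ (B × Fin ℓ)} (hu : u ∈ F) (huv : (Gconn GA GB f ℓ).Adj u v) :
    v ∈ burnRegion F ∨ ∃ w, ∃ k ∈ fireIndices F w, v = pathVertex w (k - 1) := by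
  obtain ⟨w, k, hkℓ, rfl⟩ := hF.1 u hu
  have hk : k ∈ fireIndices F w := mem_fireIndices.2 ⟨hkℓ, hu⟩
  obtain ⟨hk1, hk3, -⟩ := hF.2 w k hk
  rcases Gconn.eq_pathVertex_of_adj (by omega) hkℓ huv with rfl | rfl
  exacts [.inr ⟨w, k, hk, rfl⟩, .inl (hF.pathVertex_mem_burnRegion.2 ⟨k, hk, .inr rfl⟩)]

theorem adj_of_mem_burnRegion (hF : IsScattered F) {GA : SimpleGraph A} {GB : SimpleGraph B}
    {f : B → A} {u v : A ⊕ B ⊕ (B × Fin ℓ)}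
    (hu : u ∈ burnRegion F) (huv : (Gconn GA GB f ℓ).Adj u v) :
    v ∈ burnRegion F ∨ (∃ w, ∃ k ∈ fireIndices F w, v = pathVertex w (k - 1)) ∨
      ∃ w, ∃ k ∈ fireIndices F w, v = pathVertex w (k + 2) := by
  obtain ⟨w, k, hk, rfl | rfl⟩ := (mem_burnRegion hF.1).1 hu
  · exact (hF.adj_of_mem (mem_fireIndices.1 hk).2 huv).imp_right .inl
  obtain ⟨hk1, hk3, -⟩ := hF.2 w k hk
  rcases Gconn.eq_pathVertex_of_adj (by omega) (by omega) huv with rfl | rfl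
  exacts [.inl (hF.pathVertex_mem_burnRegion.2 ⟨k, hk, .inl rfl⟩), .inr (.inr ⟨w, k, hk, rfl⟩)]

theorem pathVertex_notMem_burnRegion (hF : IsScattered F) {w : B} {t : ℕ}
    (ht : ∀ k ∈ fireIndices F w, t ≠ k ∧ t ≠ k + 1) : pathVertex w t ∉ burnRegion F := fun h => by
  obtain ⟨k, hk, h⟩ := hF.pathVertex_mem_burnRegion.1 h
  have := ht k hk
  omega

theorem reachableAvoiding_inl_pathVertex_length (hF : IsScattered F) {GA : SimpleGraph A}
    {GB : SimpleGraph B} {f : B → A} (hGA : GA.Preconnected) (hGB : GB.Preconnected)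
    (hℓ : 0 < ℓ) {w₀ : B} (hw₀ : ∀ j, pathVertex w₀ j ∉ F) (w : B) :
    (Gconn GA GB f ℓ).ReachableAvoiding (burnRegion F) (Sum.inl (f w)) (pathVertex w ℓ) :=
  Gconn.reachableAvoiding_inl_pathVertex_length hGA hGB hℓ hF.inl_notMem_burnRegion
    (fun w' => hF.pathVertex_notMem_burnRegion fun k hk => by have := hF.2 w' k hk; omega)
    (fun j h => by
      obtain ⟨k, hk, -⟩ := hF.pathVertex_mem_burnRegion.1 h
      exact hw₀ k (mem_fireIndices.1 hk).2) w

theorem reachableAvoiding_guard (hF : IsScattered F) {GA : SimpleGraph A} {GB : SimpleGraph B}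
    {f : B → A} (hGA : GA.Preconnected) (hGB : GB.Preconnected) {w₀ : B}
    (hw₀ : ∀ j, pathVertex w₀ j ∉ F) {w : B} {k : ℕ} (hk : k ∈ fireIndices F w) :
    (Gconn GA GB f ℓ).ReachableAvoiding (burnRegion F) (pathVertex w (k - 1))
      (pathVertex w ((fireIndices F w).cyclicPred k + 2)) := by
  set q := (fireIndices F w).cyclicPred k
  obtain ⟨hk1, hk3, -⟩ := hF.2 w k hk
  obtain ⟨-, hq3, hqsep⟩ := hF.2 w q (cyclicPred_mem hk)
  rcases cyclicPred_spec (s := fireIndices F w) (a := k) with ⟨hqk, hbelow⟩ | hwrap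
  · have := hqsep k hk hqk
    refine (Gconn.reachableAvoiding_pathVertex w (by omega) (by omega) fun t _ _ =>
      hF.pathVertex_notMem_burnRegion fun k' hk' => ?_).symm
    have := hbelow k' hk'
    omega
  · have hlow : ∀ t ≤ k - 1, pathVertex w t ∉ burnRegion F := fun t _ =>
      hF.pathVertex_notMem_burnRegion fun k' hk' => by have := (hwrap k' hk').1; omega
    exact (Gconn.reachableAvoiding_pathVertex w (Nat.zero_le _) (by omega)
      fun t _ ht => hlow t ht).symm.trans <|
      ((Gconn.adj_inl_pathVertex_zero w (by omega)).symm.reachableAvoiding (hlow 0 (by omega))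
        (hF.inl_notMem_burnRegion _)).trans <|
      (hF.reachableAvoiding_inl_pathVertex_length hGA hGB (by omega) hw₀ w).trans <|
      (Gconn.reachableAvoiding_pathVertex w (show q + 2 ≤ ℓ by omega) le_rfl fun t ht _ =>
        hF.pathVertex_notMem_burnRegion fun k' hk' => by have := (hwrap k' hk').2; omega).symm

theorem card_sigma_fireIndices [Fintype B] (hF : IsScattered F) :
    ((univ : Finset B).sigma (fireIndices F)).card = F.card := by
  refine card_nbij (fun y => pathVertex y.1 y.2)
    (fun y hy => (mem_fireIndices.1 (mem_sigma.1 hy).2).2) ?_ fun x hx => ?_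
  · rintro ⟨w, k⟩ - ⟨w', k'⟩ hy' h
    obtain ⟨rfl, rfl⟩ :=
      (pathVertex_eq_pathVertex_iff (mem_fireIndices.1 (mem_sigma.1 hy').2).1).1 h
    rfl
  · obtain ⟨w, j, hj, rfl⟩ := hF.1 x hx
    exact ⟨⟨w, j⟩, mem_sigma.2 ⟨mem_univ _, mem_fireIndices.2 ⟨hj, hx⟩⟩, rfl⟩

theorem card_sub_PRMVS_le [Fintype A] [Fintype B] (hF : IsScattered F) {GA : SimpleGraph A}
    {GB : SimpleGraph B} {f : B → A} (hGA : GA.Preconnected) (hGB : GB.Preconnected)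
    (hB : F.card < Fintype.card B) :
    Fintype.card (A ⊕ B ⊕ (B × Fin ℓ)) - PRMVS (Gconn GA GB f ℓ) F F.card ≤ 2 * F.card := by
  obtain ⟨w₀, hw₀⟩ := exists_forall_pathVertex_notMem hB
  set Q := (univ : Finset B).sigma (fireIndices F)
  have hQ : ∀ {w k}, k ∈ fireIndices F w → (⟨w, k⟩ : Σ _ : B, ℕ) ∈ Q := fun hk =>
    mem_sigma.2 ⟨mem_univ _, hk⟩
  refine (card_sub_PRMVS_le_of_twoMoves (Q.equivFinOfCardEq hF.card_sigma_fireIndices)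
    (fun y => pathVertex y.1.1 (y.1.2 - 1))
    (fun y => pathVertex y.1.1 ((fireIndices F y.1.1).cyclicPred y.1.2 + 2))
    subset_union_left (fun u hu v huv => ?_) (fun u hu v huv => ?_) fun y => ?_).trans
    card_burnRegion_le
  · obtain h | ⟨w, k, hk, rfl⟩ := hF.adj_of_mem hu huv
    exacts [.inl h, .inr ⟨⟨⟨w, k⟩, hQ hk⟩, rfl⟩]
  · obtain h | ⟨w, k, hk, rfl⟩ | ⟨w, q, hq, rfl⟩ := hF.adj_of_mem_burnRegion hu huv
    · exact .inl h
    · exact .inr (.inl ⟨⟨⟨w, k⟩, hQ hk⟩, rfl⟩)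
    · obtain ⟨k, hk, rfl⟩ := exists_cyclicPred_eq hq
      exact .inr (.inr ⟨⟨⟨w, k⟩, hQ hk⟩, rfl⟩)
  · exact hF.reachableAvoiding_guard hGA hGB hw₀ (mem_sigma.1 y.2).2

end IsScattered

theorem card_hubNbhd_le [Fintype A] [Fintype B] :
    (hubNbhd : Finset (A ⊕ B ⊕ (B × Fin ℓ))).card ≤ Fintype.card A + 4 * Fintype.card B := by
  have hsub : (hubNbhd : Finset (A ⊕ B ⊕ (B × Fin ℓ))) ⊆ univ.image Sum.inl ∪
      (univ ×ˢ {0, ℓ - 2, ℓ - 1, ℓ}).image fun y : B × ℕ => pathVertex y.1 y.2 := by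
    rintro (a | w | ⟨w, j⟩) hv
    · simp
    · exact mem_union_right _ (mem_image.2 ⟨(w, ℓ), by simp, pathVertex_of_le le_rfl⟩)
    · have := (mem_filter.1 hv).2 w j (pathVertex_of_lt j.2).symm
      exact mem_union_right _ (mem_image.2 ⟨(w, j), by simp; omega, pathVertex_of_lt j.2⟩)
  calc _ ≤ _ := card_le_card hsub
    _ ≤ Fintype.card A + Fintype.card B * 4 := by
      refine (card_union_le _ _).trans (add_le_add (card_image_le.trans (by simp))
        (card_image_le.trans ?_))
      rw [card_product, card_univ]
      exact Nat.mul_le_mul_left _ card_le_four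
    _ = _ := by ring

theorem exists_mem_hubNbhd_or_close_pair_of_not_isScattered [Fintype A] [Fintype B]
    (h : ¬ IsScattered F) :
    (∃ x ∈ F, x ∈ hubNbhd) ∨
      ∃ x ∈ F, ∃ y ∈ F, x ≠ y ∧ y ∈ ({pathSucc x, pathSucc (pathSucc x)} : Finset _) := by
  by_contra! hc
  obtain ⟨hN, hclose⟩ := hc
  have hdeep : ∀ x ∈ F, ∃ w j, x = pathVertex w j ∧ 1 ≤ j ∧ j + 3 ≤ ℓ := fun x hx => by
    have := hN x hx
    simp only [hubNbhd, mem_filter, mem_univ, true_and, not_forall] at this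
    obtain ⟨w, j, rfl, hj⟩ := this
    exact ⟨w, j, rfl, by omega, by omega⟩
  refine h ⟨fun x hx => ?_, fun w k hk => ?_⟩
  · obtain ⟨w, j, rfl, -, hj⟩ := hdeep x hx
    exact ⟨w, j, by omega, rfl⟩
  · obtain ⟨hkℓ, hkF⟩ := mem_fireIndices.1 hk
    obtain ⟨w', j, hwj, hj1, hj3⟩ := hdeep _ hkF
    obtain ⟨rfl, rfl⟩ := (pathVertex_eq_pathVertex_iff (by omega)).1 hwj
    refine ⟨hj1, hj3, fun k' hk' hlt => not_lt.1 fun hlt' => ?_⟩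
    obtain ⟨hk'ℓ, hk'F⟩ := mem_fireIndices.1 hk'
    refine hclose _ hkF _ hk'F (fun he => ?_) ?_
    · have := ((pathVertex_eq_pathVertex_iff hk'ℓ).1 he).2
      omega
    · rw [pathSucc_pathVertex hkℓ, pathSucc_pathVertex (by omega)]
      obtain rfl | rfl : k' = k + 1 ∨ k' = k + 2 := by omega
      all_goals simp

end Configurations

theorem stmt11_general {A B : Type*} [Fintype A] [DecidableEq A] [Fintype B] [DecidableEq B]
    (b : ℕ)
    (GA : SimpleGraph A) (hGA : GA.Connected)
    (GB : SimpleGraph B) (hGB : GB.Connected)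
    (hcB : Fintype.card B = b + 1)
    (f : B → A) :
    ∃ C : ℕ, ∀ ℓ : ℕ, 1 ≤ ℓ →
      ∑ F ∈ (Finset.univ : Finset (A ⊕ B ⊕ (B × Fin ℓ))).powersetCard b,
        (Fintype.card (A ⊕ B ⊕ (B × Fin ℓ)) - FF.PRMVS (Gconn GA GB f ℓ) F b)
      ≤ C * ℓ ^ b := by
  refine ⟨(2 * b + (Fintype.card A + 4 * (b + 1)) + 2) * (Fintype.card A + 2 * (b + 1)) ^ b,
    fun ℓ hℓ => ?_⟩
  have hn : Fintype.card (A ⊕ B ⊕ (B × Fin ℓ)) ≤ (Fintype.card A + 2 * (b + 1)) * ℓ := by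
    simp only [Fintype.card_sum, Fintype.card_prod, Fintype.card_fin, hcB]
    nlinarith
  have hN := card_hubNbhd_le (A := A) (B := B) (ℓ := ℓ)
  rw [hcB] at hN
  calc _ ≤ (2 * b + hubNbhd.card + 2) * Fintype.card (A ⊕ B ⊕ (B × Fin ℓ)) ^ b :=
        sum_powersetCard_le_of_exists_mem_or_close_pair hubNbhd
          (fun x => {pathSucc x, pathSucc (pathSucc x)}) (fun _ => card_le_two) IsScattered _
          (fun F hF hs => by
            obtain ⟨-, rfl⟩ := mem_powersetCard.1 hF
            exact hs.card_sub_PRMVS_le hGA.preconnected hGB.preconnected (by omega))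
          (fun _ => Nat.sub_le _ _)
          fun _ _ => exists_mem_hubNbhd_or_close_pair_of_not_isScattered
    _ ≤ (2 * b + (Fintype.card A + 4 * (b + 1)) + 2) *
          ((Fintype.card A + 2 * (b + 1)) * ℓ) ^ b := by gcongr
    _ = _ := by rw [mul_pow, mul_assoc]

theorem stmt11 {A B : Type*} [Fintype A] [DecidableEq A] [Fintype B] [DecidableEq B]
    (b : ℕ) (hb : 1 ≤ b)
    (GA : SimpleGraph A) (hGA : GA.Connected)
    (GB : SimpleGraph B) (hGB : GB.Connected)
    (hcB : Fintype.card B = b + 1) (hcA : b + 1 ≤ Fintype.card A)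
    (f : B → A) (hf : Function.Injective f) :
    ∃ C : ℕ, ∀ ℓ : ℕ, 1 ≤ ℓ →
      ∑ F ∈ (Finset.univ : Finset (A ⊕ B ⊕ (B × Fin ℓ))).powersetCard b,
        (Fintype.card (A ⊕ B ⊕ (B × Fin ℓ)) - FF.PRMVS (Gconn GA GB f ℓ) F b)
      ≤ C * ℓ ^ b :=
  stmt11_general b GA hGA GB hGB hcB f
end
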